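/- Let λ/μ be a skew shape with n boxes and let S, T ∈ SYT(λ/μ) with S ≠ T. If ℓ(w_S) ≥ ℓ(w_T), where ℓ denotes Coxeter length in S_n, then A_{S,T} = 0. Consequently, when the standard tableaux are grouped by the length of their word, the transition matrix (A_{S,T}) has diagonal matrix blocks on its main diagonal. -/

import Mathlib

open scoped Classical

noncomputable section

/-- A skew shape `λ/μ`: a pair of Young diagrams with `μ ⊆ λ`. -/
structure SkewShape where
  lam : YoungDiagram
  mu : YoungDiagram
  sub : mu ≤ lam

namespace SkewShape

/-- The boxes of the skew shape: boxes of `λ` not in `μ`. -/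
def cells (sh : SkewShape) : Finset (ℕ × ℕ) := sh.lam.cells \ sh.mu.cells

/-- The number `n` of boxes of the skew shape. -/
def nb (sh : SkewShape) : ℕ := sh.cells.card

/-- `f` is a filling of the skew shape with `1, …, n`, each appearing exactly once
(normalized to be `0` off the shape). -/
def IsFilling (sh : SkewShape) (f : ℕ × ℕ → ℕ) : Prop :=
  Set.BijOn f (↑sh.cells) (↑(Finset.Icc 1 sh.nb)) ∧ ∀ b, b ∉ sh.cells → f b = 0

/-- Entries increase from left to right along rows and from top to bottom down columns. -/
def IsRowColStrict (sh : SkewShape) (f : ℕ × ℕ → ℕ) : Prop :=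
  (∀ x y : ℕ, (x, y) ∈ sh.cells → (x, y + 1) ∈ sh.cells → f (x, y) < f (x, y + 1)) ∧
  (∀ x y : ℕ, (x, y) ∈ sh.cells → (x + 1, y) ∈ sh.cells → f (x, y) < f (x + 1, y))

/-- The set of standard Young tableaux of shape `λ/μ`. -/
def SYT (sh : SkewShape) : Set ((ℕ × ℕ) → ℕ) := {f | sh.IsFilling f ∧ sh.IsRowColStrict f}

/-- Standard Young tableaux of shape `λ/μ`, as a type. -/
def SYTt (sh : SkewShape) : Type := {f : (ℕ × ℕ) → ℕ // f ∈ sh.SYT}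

/-- The box of the tableau `f` containing the entry `i`. -/
def boxOf (sh : SkewShape) (f : (ℕ × ℕ) → ℕ) (i : ℕ) : ℕ × ℕ :=
  Function.invFunOn f (↑sh.cells) i

end SkewShape

/-- The content `ct(b) = y - x` of a box `b = (x, y)` (row `x`, column `y`). -/
def ctZ (b : ℕ × ℕ) : ℤ := (b.2 : ℤ) - (b.1 : ℤ)

/-- Exchange the entries `i` and `i+1` in a filling. -/
def sApply (i : ℕ) (f : (ℕ × ℕ) → ℕ) : (ℕ × ℕ) → ℕ := fun b => Equiv.swap i (i + 1) (f b)

/-- Column-reading order on boxes: by column (left to right), then by row (top to bottom). -/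
def colLt (b b' : ℕ × ℕ) : Prop := b.2 < b'.2 ∨ (b.2 = b'.2 ∧ b.1 < b'.1)

namespace SkewShape

/-- The column reading tableau `C` of the skew shape: enter `1, …, n` consecutively down
the columns, filling the columns from left to right. -/
def colReading (sh : SkewShape) : (ℕ × ℕ) → ℕ :=
  fun b => if b ∈ sh.cells then 1 + (sh.cells.filter fun b' => colLt b' b).card else 0

/-- The coefficient `a_{i,j}(T) = 1 / (ct(T(j)) - ct(T(i)))`. -/
def aIJ (sh : SkewShape) (f : (ℕ × ℕ) → ℕ) (i j : ℕ) : ℂ :=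
  1 / ((ctZ (sh.boxOf f j) : ℂ) - (ctZ (sh.boxOf f i) : ℂ))

/-- The coefficient `a_i(T) = a_{i,i+1}(T)`. -/
def aI (sh : SkewShape) (f : (ℕ × ℕ) → ℕ) (i : ℕ) : ℂ := sh.aIJ f i (i + 1)

/-- The seminormal basis vector `v_f` (or `0` if `f` is not standard). -/
def vOf (sh : SkewShape) (f : (ℕ × ℕ) → ℕ) : sh.SYTt →₀ ℂ :=
  if h : f ∈ sh.SYT then Finsupp.single ⟨f, h⟩ 1 else 0

/-- The seminormal operator of the simple transposition `s_i`:
`σ_i v_T = a_i(T) v_T + (1 + a_i(T)) v_{s_i(T)}`. -/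
def semiOp (sh : SkewShape) (i : ℕ) : (sh.SYTt →₀ ℂ) →ₗ[ℂ] (sh.SYTt →₀ ℂ) :=
  Finsupp.lsum ℂ fun T : sh.SYTt =>
    LinearMap.toSpanSingleton ℂ _
      (sh.aI T.1 i • sh.vOf T.1 + (1 + sh.aI T.1 i) • sh.vOf (sApply i T.1))

/-- `opWord sh [i_1, …, i_k] = σ_{i_1} ∘ σ_{i_2} ∘ ⋯ ∘ σ_{i_k}`. -/
def opWord (sh : SkewShape) : List ℕ → ((sh.SYTt →₀ ℂ) →ₗ[ℂ] (sh.SYTt →₀ ℂ))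
  | [] => LinearMap.id
  | i :: is => semiOp sh i ∘ₗ opWord sh is

end SkewShape

/-- The permutation `s_{i_1} s_{i_2} ⋯ s_{i_k}` determined by a list of indices. -/
def wordProd (l : List ℕ) : Equiv.Perm ℕ := (l.map fun i => Equiv.swap i (i + 1)).prod

/-- The letters of the word index simple transpositions `s_1, …, s_{n-1}` of `S_n`. -/
def IsSnWord (n : ℕ) (l : List ℕ) : Prop := ∀ i ∈ l, 1 ≤ i ∧ i + 1 ≤ n

/-- `l` is a reduced word for `w` in `S_n`. -/
def IsReducedWord (n : ℕ) (w : Equiv.Perm ℕ) (l : List ℕ) : Prop :=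
  IsSnWord n l ∧ wordProd l = w ∧
    ∀ l' : List ℕ, IsSnWord n l' → wordProd l' = w → l.length ≤ l'.length

/-- The Coxeter length of `w` in `S_n`: the minimal number of simple transpositions
in a word for `w`. -/
def permLength (n : ℕ) (w : Equiv.Perm ℕ) : ℕ :=
  sInf {k | ∃ l : List ℕ, IsSnWord n l ∧ l.length = k ∧ wordProd l = w}

/-- Bruhat order on `S_n`: `σ ≤ τ` iff some reduced word for `τ` contains a subword
that is a reduced word for `σ`. -/
def BruhatLE (n : ℕ) (σ τ : Equiv.Perm ℕ) : Prop :=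
  ∃ lτ : List ℕ, IsReducedWord n τ lτ ∧ ∃ lσ : List ℕ, lσ.Sublist lτ ∧ IsReducedWord n σ lσ

namespace SkewShape

/-- `w` is the word `w_f` of the tableau `f`: `w(C) = f`, with `w` fixing everything
outside `{1, …, n}`. -/
def IsWordOf (sh : SkewShape) (f : (ℕ × ℕ) → ℕ) (w : Equiv.Perm ℕ) : Prop :=
  (∀ b ∈ sh.cells, w (sh.colReading b) = f b) ∧ ∀ m, m ∉ Finset.Icc 1 sh.nb → w m = m

/-- Bruhat order on standard tableaux: `S ≤ T` iff `w_S ≤ w_T` in Bruhat order on `S_n`. -/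
def tabLE (sh : SkewShape) (f g : (ℕ × ℕ) → ℕ) : Prop :=
  ∃ wf wg : Equiv.Perm ℕ, sh.IsWordOf f wf ∧ sh.IsWordOf g wg ∧ BruhatLE sh.nb wf wg

end SkewShape

/-- Apply the letters of a list, left to right, to a filling. -/
def applyWord : List ℕ → ((ℕ × ℕ) → ℕ) → ((ℕ × ℕ) → ℕ)
  | [], f => f
  | i :: is, f => applyWord is (sApply i f)

namespace SkewShape

/-- `(f, [i_1, …, i_k])` is a path `f →^{s_{i_1}} ⋯ →^{s_{i_k}}` in the weak Bruhat graph: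
every tableau along the way is standard. -/
def IsPath (sh : SkewShape) : ((ℕ × ℕ) → ℕ) → List ℕ → Prop
  | f, [] => f ∈ sh.SYT
  | f, i :: is => f ∈ sh.SYT ∧ sh.IsPath (sApply i f) is

/-- `(f, [i_1, …, i_k], [z_1, …, z_k])` is a subpath of the path starting at `f` with letters
`[i_1, …, i_k]`; at step `j` one moves by `s_{i_j}` if `z_j = true` and waits otherwise.
All intermediate tableaux must be standard. -/
def IsSubpath (sh : SkewShape) : ((ℕ × ℕ) → ℕ) → List ℕ → List Bool → Prop
  | f, [], [] => f ∈ sh.SYT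
  | f, i :: is, z :: zs => f ∈ sh.SYT ∧ sh.IsSubpath (if z then sApply i f else f) is zs
  | _, _, _ => False

end SkewShape

/-- The tableau at which a subpath terminates. -/
def subEnd : ((ℕ × ℕ) → ℕ) → List ℕ → List Bool → ((ℕ × ℕ) → ℕ)
  | f, [], _ => f
  | f, _ :: _, [] => f
  | f, i :: is, z :: zs => subEnd (if z then sApply i f else f) is zs

namespace SkewShape

/-- The `π`-weight of a subpath: the product of `a_{i_j}(S_{j-1})` over waiting steps and
`1 + a_{i_j}(S_{j-1})` over moving steps. -/
def subWeight (sh : SkewShape) : ((ℕ × ℕ) → ℕ) → List ℕ → List Bool → ℂ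
  | _, [], _ => 1
  | _, _ :: _, [] => 1
  | f, i :: is, z :: zs =>
      (if z then 1 + sh.aI f i else sh.aI f i) * sh.subWeight (if z then sApply i f else f) is zs

/-- The transition coefficient computed from a path: the sum of `π`-weights of all subpaths
of the path `(f₀, is)` terminating at `g`. -/
def pathCoeff (sh : SkewShape) (f₀ : (ℕ × ℕ) → ℕ) (is : List ℕ) (g : (ℕ × ℕ) → ℕ) : ℂ :=
  ∑ zs : Fin is.length → Bool,
    if sh.IsSubpath f₀ is (List.ofFn zs) ∧ subEnd f₀ is (List.ofFn zs) = g then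
      sh.subWeight f₀ is (List.ofFn zs)
    else 0

/-- The coefficient of `v_g` in `(σ_{i_1} ∘ ⋯ ∘ σ_{i_k})(v_C)` (or `0` if `g` is not
standard). -/
def natCoeff (sh : SkewShape) (l : List ℕ) (g : (ℕ × ℕ) → ℕ) : ℂ :=
  if h : g ∈ sh.SYT then (sh.opWord l (sh.vOf sh.colReading)) ⟨g, h⟩ else 0

end SkewShape

end


section Aux

open SkewShape

lemma wordProd_nil : wordProd [] = 1 := rfl

lemma wordProd_cons (i : ℕ) (l : List ℕ) :
    wordProd (i :: l) = Equiv.swap i (i + 1) * wordProd l := by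
  simp [wordProd]

lemma isSnWord_sublist {n : ℕ} {l m : List ℕ} (h : IsSnWord n l) (hm : m.Sublist l) :
    IsSnWord n m := fun i hi => h i (hm.subset hi)

lemma wordProd_fix {n : ℕ} {l : List ℕ} (h : IsSnWord n l) {x : ℕ}
    (hx : x ∉ Finset.Icc 1 n) : wordProd l x = x := by
  induction l with
  | nil => rfl
  | cons i is ih =>
    have hi := h i List.mem_cons_self
    have hx1 : x ≠ i := by
      rintro rfl; exact hx (Finset.mem_Icc.mpr ⟨hi.1, by omega⟩)
    have hx2 : x ≠ i + 1 := by
      rintro rfl; exact hx (Finset.mem_Icc.mpr ⟨by omega, hi.2⟩)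
    rw [wordProd_cons, Equiv.Perm.mul_apply, ih (fun j hj => h j (List.mem_cons_of_mem i hj)),
      Equiv.swap_apply_of_ne_of_ne hx1 hx2]

lemma permLength_le {n : ℕ} {w : Equiv.Perm ℕ} {l : List ℕ}
    (hl : IsSnWord n l) (hw : wordProd l = w) : permLength n w ≤ l.length :=
  Nat.sInf_le ⟨l, hl, rfl, hw⟩

lemma reduced_length {n : ℕ} {w : Equiv.Perm ℕ} {l : List ℕ}
    (h : IsReducedWord n w l) : permLength n w = l.length := by
  refine le_antisymm (permLength_le h.1 h.2.1) ?_
  have hne : {k | ∃ l' : List ℕ, IsSnWord n l' ∧ l'.length = k ∧ wordProd l' = w}.Nonempty :=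
    ⟨l.length, l, h.1, rfl, h.2.1⟩
  obtain ⟨l', hl', hlen, hw⟩ := Nat.sInf_mem hne
  calc l.length ≤ l'.length := h.2.2 l' hl' hw
    _ = permLength n w := hlen

/- ### Column reading is a bijection onto `Icc 1 n` -/

lemma colLt_trans {a b c : ℕ × ℕ} (h1 : colLt a b) (h2 : colLt b c) : colLt a c := by
  obtain ⟨a1, a2⟩ := a; obtain ⟨b1, b2⟩ := b; obtain ⟨c1, c2⟩ := c
  simp only [colLt] at *; omega

lemma colLt_irrefl (a : ℕ × ℕ) : ¬ colLt a a := by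
  obtain ⟨a1, a2⟩ := a; simp only [colLt]; omega

lemma colLt_total {a b : ℕ × ℕ} (h : a ≠ b) : colLt a b ∨ colLt b a := by
  obtain ⟨a1, a2⟩ := a; obtain ⟨b1, b2⟩ := b
  simp only [colLt]
  rcases Nat.lt_trichotomy a2 b2 with h2 | h2 | h2
  · left; left; exact h2
  · rcases Nat.lt_trichotomy a1 b1 with h1 | h1 | h1
    · left; right; exact ⟨h2, h1⟩
    · exact absurd (by rw [h1, h2]) h
    · right; right; omega
  · right; left; exact h2

/-- The rank of a box in column reading order. -/
noncomputable def colRank (sh : SkewShape) (b : ℕ × ℕ) : ℕ :=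
  (sh.cells.filter fun b' => colLt b' b).card

lemma colReading_eq_rank {sh : SkewShape} {b : ℕ × ℕ} (hb : b ∈ sh.cells) :
    sh.colReading b = 1 + colRank sh b := by
  rw [SkewShape.colReading, if_pos hb]; rfl

lemma colRank_lt_colRank {sh : SkewShape} {b b' : ℕ × ℕ} (hb : b ∈ sh.cells)
    (h : colLt b b') : colRank sh b < colRank sh b' := by
  apply Finset.card_lt_card
  have hsub : (sh.cells.filter fun x => colLt x b) ⊆ sh.cells.filter fun x => colLt x b' := by
    intro x hx
    rw [Finset.mem_filter] at hx ⊢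
    exact ⟨hx.1, colLt_trans hx.2 h⟩
  refine (Finset.ssubset_iff_of_subset hsub).mpr ⟨b, ?_, ?_⟩
  · exact Finset.mem_filter.mpr ⟨hb, h⟩
  · intro hmem
    exact colLt_irrefl b (Finset.mem_filter.mp hmem).2

lemma colRank_injOn (sh : SkewShape) :
    Set.InjOn (colRank sh) ↑sh.cells := by
  intro a ha b hb hab
  by_contra hne
  rcases colLt_total hne with h | h
  · exact absurd hab (Nat.ne_of_lt (colRank_lt_colRank ha h))
  · exact absurd hab.symm (Nat.ne_of_lt (colRank_lt_colRank hb h))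

lemma colRank_lt_nb {sh : SkewShape} {b : ℕ × ℕ} (hb : b ∈ sh.cells) :
    colRank sh b < sh.nb := by
  apply Finset.card_lt_card
  refine (Finset.ssubset_iff_of_subset (Finset.filter_subset _ _)).mpr ⟨b, hb, ?_⟩
  intro hmem
  exact colLt_irrefl b (Finset.mem_filter.mp hmem).2

lemma colRank_image (sh : SkewShape) :
    sh.cells.image (colRank sh) = Finset.range sh.nb := by
  apply Finset.eq_of_subset_of_card_le
  · intro x hx
    obtain ⟨b, hb, rfl⟩ := Finset.mem_image.mp hx
    exact Finset.mem_range.mpr (colRank_lt_nb hb)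
  · rw [Finset.card_range, Finset.card_image_of_injOn (colRank_injOn sh)]
    rfl

lemma colReading_surj (sh : SkewShape) {x : ℕ} (hx : x ∈ Finset.Icc 1 sh.nb) :
    ∃ b ∈ sh.cells, sh.colReading b = x := by
  rw [Finset.mem_Icc] at hx
  have hx' : x - 1 ∈ Finset.range sh.nb := Finset.mem_range.mpr (by omega)
  rw [← colRank_image] at hx'
  obtain ⟨b, hb, hrb⟩ := Finset.mem_image.mp hx'
  exact ⟨b, hb, by rw [colReading_eq_rank hb, hrb]; omega⟩

/- ### Support of `opWord l (v_C)` -/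

lemma vOf_apply_ne_zero {sh : SkewShape} {f : (ℕ × ℕ) → ℕ} {G : sh.SYTt}
    (h : sh.vOf f G ≠ 0) : G.1 = f := by
  rw [SkewShape.vOf] at h
  split_ifs at h with hf
  · erw [Finsupp.single_apply] at h
    split_ifs at h with he
    · rw [← he]
    · exact absurd rfl h
  · exact absurd rfl h

lemma opWord_support (sh : SkewShape) (l : List ℕ) (G : sh.SYTt)
    (h : sh.opWord l (sh.vOf sh.colReading) G ≠ 0) :
    ∃ m : List ℕ, m.Sublist l ∧ G.1 = fun b => wordProd m (sh.colReading b) := by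
  induction l generalizing G with
  | nil =>
    refine ⟨[], List.Sublist.refl _, ?_⟩
    have hG := vOf_apply_ne_zero (sh := sh) (f := sh.colReading) (G := G) h
    funext b
    rw [hG]
    simp [wordProd_nil]
  | cons i is ih =>
    rw [SkewShape.opWord, LinearMap.comp_apply, SkewShape.semiOp, Finsupp.lsum_apply,
      Finsupp.sum_apply] at h
    obtain ⟨U, hUmem, hUne⟩ := Finset.exists_ne_zero_of_sum_ne_zero h
    have hyU : sh.opWord is (sh.vOf sh.colReading) U ≠ 0 := Finsupp.mem_support_iff.mp hUmem
    obtain ⟨m, hm, hUeq⟩ := ih U hyU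
    simp only [LinearMap.toSpanSingleton_apply, Finsupp.smul_apply, Finsupp.add_apply,
      smul_eq_mul] at hUne
    have hcase : sh.vOf U.1 G ≠ 0 ∨ sh.vOf (sApply i U.1) G ≠ 0 := by
      by_contra hc
      push_neg at hc
      rw [hc.1, hc.2] at hUne
      simp at hUne
    rcases hcase with hv | hv
    · refine ⟨m, hm.cons i, ?_⟩
      rw [vOf_apply_ne_zero hv, hUeq]
    · refine ⟨i :: m, hm.cons₂ i, ?_⟩
      have hGv := vOf_apply_ne_zero hv
      funext b
      rw [hGv]
      have : U.1 b = wordProd m (sh.colReading b) := by rw [hUeq]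
      rw [sApply, this, wordProd_cons, Equiv.Perm.mul_apply]

end Aux

/-- **Remark (block triangularity).**
If `S, T ∈ SYT(λ/μ)` with `S ≠ T` and `ℓ(w_S) ≥ ℓ(w_T)` (Coxeter length in `S_n`),
then `A_{S,T} = 0`; grouping tableaux by the length of their word therefore puts
diagonal blocks on the main diagonal of the transition matrix.  Here `A_{S,T}` is the
coefficient of `v_S` in `n_T`, computed from any reduced word for `w_T`. -/
theorem transition_vanishing_by_length
    (sh : SkewShape) (S T : (ℕ × ℕ) → ℕ) (hS : S ∈ sh.SYT) (hT : T ∈ sh.SYT)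
    (hne : S ≠ T)
    (wS wT : Equiv.Perm ℕ) (hwS : sh.IsWordOf S wS) (hwT : sh.IsWordOf T wT)
    (hlen : permLength sh.nb wT ≤ permLength sh.nb wS)
    (l : List ℕ) (hl : IsReducedWord sh.nb wT l) :
    sh.natCoeff l S = 0 := by
  by_contra hne0
  rw [SkewShape.natCoeff, dif_pos hS] at hne0
  obtain ⟨m, hml, hSm⟩ := opWord_support sh l ⟨S, hS⟩ hne0
  have hSnm : IsSnWord sh.nb m := isSnWord_sublist hl.1 hml
  have hwm : wS = wordProd m := by
    ext x
    by_cases hx : x ∈ Finset.Icc 1 sh.nb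
    · obtain ⟨b, hb, hCb⟩ := colReading_surj sh hx
      rw [← hCb, hwS.1 b hb]
      exact congrFun hSm b
    · rw [hwS.2 x hx, wordProd_fix hSnm hx]
  have h1 : permLength sh.nb wS ≤ m.length := permLength_le hSnm hwm.symm
  have h2 : permLength sh.nb wT = l.length := reduced_length hl
  have h3 : m.length = l.length :=
    le_antisymm hml.length_le (by omega)
  have hmeq : m = l := hml.eq_of_length h3
  apply hne
  funext b
  by_cases hb : b ∈ sh.cells
  · have hSb : S b = wordProd m (sh.colReading b) := congrFun hSm b
    rw [hSb, hmeq, hl.2.1, hwT.1 b hb]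
  · rw [hS.1.2 b hb, hT.1.2 b hb]
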